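/- Let 0 < p ≤ 1 and a(n) = 1/(n (log n)^p) for n ≥ 2. Then the partial sums satisfy Σ_{i=2}^{n−1} a(i) ≤ (1/(1−p)) (log n)^{1−p} when p < 1 (and ≤ log log n + constant when p = 1), and for any constant K̃ > 0 the series Σ_{n=2}^{∞} a(n)^2 · (Σ_{i=2}^{n−1} a(i))^2 · exp(2K̃ Σ_{i=2}^{n−1} a(i)) converges. -/

import Mathlib

/-!
The partial sums are compared with a primitive `F` of the decreasing function
`x ↦ 1 / (x (log x)^p)`: by the mean value theorem each term is at most the increment of `F`
over the preceding unit interval, so the sums telescope to `(log n)^(1-p) / (1-p)` when `p < 1`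
(where `F` extends continuously to `1` with `F 1 = 0`) and to `log log n + c` when `p = 1`.
Either bound is `o(log n)`, hence `Sₙ² exp(2K̃ Sₙ) = O(√n)`, and since `aₙ ≤ 1/n` the terms
of the series are `O(n^(-3/2))`.
-/

open Real Finset Filter Asymptotics

noncomputable def stepSize (p x : ℝ) : ℝ := 1 / (x * log x ^ p)

theorem mul_sub_le_sub_of_hasDerivAt_of_antitoneOn {f F : ℝ → ℝ} {x y : ℝ} (hxy : x < y)
    (hF : ContinuousOn F (Set.Icc x y)) (hF' : ∀ t ∈ Set.Ioo x y, HasDerivAt F (f t) t)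
    (hf : AntitoneOn f (Set.Ioc x y)) : (y - x) * f y ≤ F y - F x := by
  obtain ⟨c, hc, hslope⟩ := exists_hasDerivAt_eq_slope F f hxy hF hF'
  have hle : f y ≤ f c := hf ⟨hc.1, hc.2.le⟩ ⟨hxy, le_rfl⟩ hc.2.le
  rw [hslope, le_div_iff₀ (sub_pos.2 hxy)] at hle
  linarith

theorem sum_Ico_le_sub_of_hasDerivAt_of_antitoneOn {f F : ℝ → ℝ} {m n : ℕ} (hmn : m ≤ n)
    (hF : ContinuousOn F (Set.Ici (m : ℝ))) (hF' : ∀ t ∈ Set.Ioi (m : ℝ), HasDerivAt F (f t) t)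
    (hf : AntitoneOn f (Set.Ioi (m : ℝ))) :
    ∑ i ∈ Ico (m + 1) (n + 1), f i ≤ F n - F m := by
  induction n, hmn using Nat.le_induction with
  | base => simp
  | succ n hmn ih =>
    have hm : (m : ℝ) ≤ n := by exact_mod_cast hmn
    have hstep := mul_sub_le_sub_of_hasDerivAt_of_antitoneOn (lt_add_one (n : ℝ))
      (hF.mono fun t ht => hm.trans ht.1) (fun t ht => hF' t (hm.trans_lt ht.1))
      (hf.mono fun t ht => hm.trans_lt ht.1)
    rw [sum_Ico_succ_top (by omega)]
    push_cast
    linarith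

section stepSize

variable {p : ℝ}

theorem stepSize_nonneg {x : ℝ} (hx : 1 ≤ x) : 0 ≤ stepSize p x := by
  have := log_nonneg hx
  unfold stepSize
  positivity

theorem sum_stepSize_nonneg (n : ℕ) : 0 ≤ ∑ i ∈ Ico 2 n, stepSize p i :=
  sum_nonneg fun i hi => stepSize_nonneg (by exact_mod_cast (by grind : 1 ≤ i))

theorem sum_stepSize_le_succ (n : ℕ) :
    ∑ i ∈ Ico 2 n, stepSize p i ≤ ∑ i ∈ Ico 2 (n + 1), stepSize p i :=
  sum_le_sum_of_subset_of_nonneg (Ico_subset_Ico_right n.le_succ)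
    fun i hi _ => stepSize_nonneg (by exact_mod_cast (by grind : 1 ≤ i))

theorem antitoneOn_stepSize (hp : 0 ≤ p) : AntitoneOn (stepSize p) (Set.Ioi 1) := by
  intro x hx y hy hxy
  have hx0 : (0 : ℝ) < x := by linarith [hx.out]
  have hy0 : (0 : ℝ) ≤ y := by linarith [hy.out]
  have hlog := log_pos hx
  unfold stepSize
  gcongr

theorem isBigO_stepSize_inv (hp : 0 ≤ p) :
    (fun n : ℕ => stepSize p n) =O[atTop] fun n => (n : ℝ)⁻¹ := by
  refine IsBigO.of_bound' ?_
  filter_upwards [eventually_ge_atTop 3] with n hn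
  have hn3 : (3 : ℝ) ≤ n := by exact_mod_cast hn
  have hlog : 1 ≤ log n := by
    rw [le_log_iff_exp_le (by linarith)]
    linarith [exp_one_lt_d9]
  have hpow := one_le_rpow hlog hp
  rw [norm_of_nonneg (stepSize_nonneg (by linarith)), norm_of_nonneg (by positivity), stepSize,
    one_div]
  exact inv_anti₀ (by positivity) (le_mul_of_one_le_right (by positivity) hpow)

theorem hasDerivAt_log_rpow_div (hp : p ≠ 1) {x : ℝ} (hx : 1 < x) :
    HasDerivAt (fun y => log y ^ (1 - p) / (1 - p)) (stepSize p x) x := by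
  have hlog := log_pos hx
  have hp' : 1 - p ≠ 0 := sub_ne_zero.2 (Ne.symm hp)
  refine (((hasDerivAt_log (by linarith)).rpow_const (p := 1 - p) (Or.inl hlog.ne')).div_const
    (1 - p)).congr_deriv ?_
  rw [stepSize, sub_sub_cancel_left, rpow_neg hlog.le]
  field_simp

theorem sum_stepSize_le_of_lt_one (hp0 : 0 ≤ p) (hp1 : p < 1) {n : ℕ} (hn : 2 ≤ n) :
    ∑ i ∈ Ico 2 n, stepSize p i ≤ 1 / (1 - p) * log n ^ (1 - p) := by
  have hcont : ContinuousOn (fun y => log y ^ (1 - p) / (1 - p)) (Set.Ici ((1 : ℕ) : ℝ)) :=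
    ((continuousOn_log.mono fun y hy => by simp at hy ⊢; linarith).rpow_const
      fun _ _ => Or.inr (by linarith)).div_const _
  have htele := sum_Ico_le_sub_of_hasDerivAt_of_antitoneOn (by omega : 1 ≤ n) hcont
    (fun t ht => hasDerivAt_log_rpow_div hp1.ne (by simpa using ht))
    ((antitoneOn_stepSize hp0).mono (by simp))
  calc ∑ i ∈ Ico 2 n, stepSize p i ≤ ∑ i ∈ Ico 2 (n + 1), stepSize p i := sum_stepSize_le_succ n
    _ ≤ _ := htele
    _ = 1 / (1 - p) * log n ^ (1 - p) := by
      rw [Nat.cast_one, log_one, zero_rpow (by linarith)]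
      ring

theorem sum_stepSize_one_le {n : ℕ} (hn : 2 ≤ n) :
    ∑ i ∈ Ico 2 n, stepSize 1 i ≤ log (log n) + (stepSize 1 2 - log (log 2)) := by
  have hderiv : ∀ t ∈ Set.Ici ((2 : ℕ) : ℝ),
      HasDerivAt (fun y => log (log y)) (stepSize 1 t) t := by
    intro t ht
    simp only [Nat.cast_ofNat, Set.mem_Ici] at ht
    refine (hasDerivAt_log_log (ne_of_gt (by linarith)) (ne_of_gt (by linarith))
      (ne_of_gt (by linarith))).congr_deriv ?_
    rw [stepSize, rpow_one, one_div, mul_inv, div_eq_mul_inv]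
  have htele := sum_Ico_le_sub_of_hasDerivAt_of_antitoneOn hn
    (fun t ht => (hderiv t ht).continuousAt.continuousWithinAt)
    (fun t ht => hderiv t (Set.mem_Ici_of_Ioi ht))
    ((antitoneOn_stepSize zero_le_one).mono fun t ht => by simp at ht ⊢; linarith)
  calc ∑ i ∈ Ico 2 n, stepSize 1 i ≤ ∑ i ∈ Ico 2 (n + 1), stepSize 1 i := sum_stepSize_le_succ n
    _ = stepSize 1 2 + ∑ i ∈ Ico 3 (n + 1), stepSize 1 i := sum_eq_sum_Ico_succ_bot (by omega) _
    _ ≤ _ := by push_cast at htele; linarith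

end stepSize

theorem isLittleO_rpow_id_atTop {q : ℝ} (hq : q < 1) : (fun x : ℝ => x ^ q) =o[atTop] id := by
  refine (isLittleO_iff_tendsto' ?_).2 ?_
  · filter_upwards [eventually_gt_atTop 0] with x hx h
    exact absurd h hx.ne'
  · refine (tendsto_rpow_neg_atTop (by linarith : 0 < 1 - q)).congr' ?_
    filter_upwards [eventually_gt_atTop 0] with x hx
    rw [id, ← rpow_sub_one hx.ne', neg_sub]

theorem isLittleO_sum_stepSize_log {p : ℝ} (hp0 : 0 < p) (hp1 : p ≤ 1) :
    (fun n : ℕ => ∑ i ∈ Ico 2 n, stepSize p i) =o[atTop] fun n => log n := by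
  have hlog : Tendsto (fun n : ℕ => log n) atTop atTop :=
    tendsto_log_atTop.comp tendsto_natCast_atTop_atTop
  obtain ⟨B, hB, hSB⟩ : ∃ B : ℕ → ℝ, B =o[atTop] (fun n => log n) ∧
      ∀ n : ℕ, 2 ≤ n → ∑ i ∈ Ico 2 n, stepSize p i ≤ B n := by
    rcases hp1.lt_or_eq with hp1 | rfl
    · exact ⟨_, ((isLittleO_rpow_id_atTop (by linarith)).comp_tendsto hlog).const_mul_left _,
        fun n hn => sum_stepSize_le_of_lt_one hp0.le hp1 hn⟩
    · exact ⟨_, (isLittleO_log_id_atTop.comp_tendsto hlog).add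
        (isLittleO_const_left.2 (Or.inr (tendsto_norm_atTop_atTop.comp hlog))),
        fun n hn => sum_stepSize_one_le hn⟩
  refine (IsBigO.of_bound' ?_).trans_isLittleO hB
  filter_upwards [eventually_ge_atTop 2] with n hn
  rw [norm_of_nonneg (sum_stepSize_nonneg n)]
  exact (hSB n hn).trans (le_abs_self _)

theorem sq_mul_exp_le_exp {s : ℝ} (hs : 0 ≤ s) (c : ℝ) :
    s ^ 2 * exp (c * s) ≤ exp ((2 + |c|) * s) := by
  have hs_exp : s ≤ exp s := by linarith [add_one_le_exp s]
  have hsq : s ^ 2 ≤ exp (2 * s) := by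
    rw [two_mul, exp_add, sq]
    exact mul_le_mul hs_exp hs_exp hs (exp_nonneg _)
  have hc : exp (c * s) ≤ exp (|c| * s) :=
    exp_le_exp.2 (mul_le_mul_of_nonneg_right (le_abs_self c) hs)
  calc s ^ 2 * exp (c * s) ≤ exp (2 * s) * exp (|c| * s) :=
        mul_le_mul hsq hc (exp_nonneg _) (exp_nonneg _)
    _ = exp ((2 + |c|) * s) := by rw [← exp_add]; ring_nf

theorem isBigO_sq_mul_exp_rpow_half {S : ℕ → ℝ} (c : ℝ) (hS0 : ∀ᶠ n in atTop, 0 ≤ S n)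
    (hS : S =o[atTop] fun n => log n) :
    (fun n => S n ^ 2 * exp (c * S n)) =O[atTop] fun n => (n : ℝ) ^ (1 / 2 : ℝ) := by
  refine IsBigO.of_bound 1 ?_
  filter_upwards [hS0, hS.bound (c := 1 / (2 * (2 + |c|))) (by positivity),
    eventually_ge_atTop 1] with n hn0 hbound hn1
  have hn : (1 : ℝ) ≤ n := by exact_mod_cast hn1
  rw [norm_of_nonneg hn0, norm_of_nonneg (log_nonneg hn)] at hbound
  rw [one_mul, norm_of_nonneg (by positivity), norm_of_nonneg (by positivity),
    rpow_def_of_pos (by linarith)]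
  calc S n ^ 2 * exp (c * S n) ≤ exp ((2 + |c|) * S n) := sq_mul_exp_le_exp hn0 c
    _ ≤ exp (log n * (1 / 2)) := by
      refine exp_le_exp.2 ?_
      calc (2 + |c|) * S n ≤ (2 + |c|) * (1 / (2 * (2 + |c|)) * log n) := by gcongr
        _ = log n * (1 / 2) := by field_simp

theorem summable_sq_mul_sq_mul_exp {a S : ℕ → ℝ} (c : ℝ) (ha : a =O[atTop] fun n => (n : ℝ)⁻¹)
    (hS0 : ∀ᶠ n in atTop, 0 ≤ S n) (hS : S =o[atTop] fun n => log n) :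
    Summable fun n => a n ^ 2 * S n ^ 2 * exp (c * S n) := by
  have hO := (ha.pow 2).mul (isBigO_sq_mul_exp_rpow_half c hS0 hS)
  refine summable_of_isBigO_nat (Real.summable_nat_rpow_inv.2 (by norm_num : (1 : ℝ) < 3 / 2)) ?_
  refine (hO.congr_left fun n => by ring).trans (EventuallyEq.isBigO ?_)
  filter_upwards [eventually_gt_atTop 0] with n hn
  have hn : (0 : ℝ) < n := by exact_mod_cast hn
  rw [← rpow_neg hn.le, show -(3 / 2 : ℝ) = -2 + 1 / 2 by norm_num, rpow_add hn, rpow_neg hn.le,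
    rpow_two, inv_pow]

/-- Partial-sum bounds and a summability result for the step sizes
`a(n) = 1/(n (log n)^p)`, `0 < p ≤ 1`. -/
theorem stmt_6 (p : ℝ) (hp0 : 0 < p) (hp1 : p ≤ 1)
    (a : ℕ → ℝ) (ha : ∀ n, a n = 1 / ((n : ℝ) * Real.log n ^ p)) :
    (p < 1 → ∀ n : ℕ, 2 ≤ n →
      ∑ i ∈ Finset.Ico 2 n, a i ≤ (1 / (1 - p)) * Real.log n ^ (1 - p))
    ∧ (p = 1 → ∃ c : ℝ, ∀ n : ℕ, 3 ≤ n →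
      ∑ i ∈ Finset.Ico 2 n, a i ≤ Real.log (Real.log n) + c)
    ∧ ∀ Ktilde : ℝ, 0 < Ktilde →
      Summable (fun n : ℕ => a n ^ 2 * (∑ i ∈ Finset.Ico 2 n, a i) ^ 2 *
        Real.exp (2 * Ktilde * ∑ i ∈ Finset.Ico 2 n, a i)) := by
  obtain rfl : a = fun n : ℕ => stepSize p n := funext ha
  refine ⟨fun hp n hn => sum_stepSize_le_of_lt_one hp0.le hp hn, ?_, fun K _ => ?_⟩
  · rintro rfl
    exact ⟨_, fun n hn => sum_stepSize_one_le (by omega)⟩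
  · exact summable_sq_mul_sq_mul_exp (2 * K) (isBigO_stepSize_inv hp0.le)
      (Eventually.of_forall sum_stepSize_nonneg) (isLittleO_sum_stepSize_log hp0 hp1)
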